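/- For every k ∈ ℤ, every θ ∈ ℂ, and all probability measures g, g⁰ on [0,1] admitting densities in L²([0,1]) (still denoted g, g⁰), the total variation distance between the frequency-k marginal mixtures satisfies d_TV(q_{θ,k,g}, q_{θ,k,g⁰}) ≤ e^{|θ|²} ‖g − g⁰‖_{L²([0,1])}. (Inequality (4.4) established in the proof of the paper's Theorem 4.3.) -/

import Mathlib

/-! Subtracting the two mixtures leaves the normalised Gaussian kernel integrated against the
signed function `g⁺ - g⁰⁺` (only positive parts survive `ENNReal.ofReal`). Each Gaussian has mass
one, so by Tonelli–Fubini the L¹ distance of the mixtures is at most `‖g⁺ - g⁰⁺‖₁ ≤ ‖g - g⁰‖₁`,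
and Cauchy–Schwarz on the unit interval bounds this by `‖g - g⁰‖₂`. -/

open MeasureTheory Measure

noncomputable section

/-- The frequency-`k` marginal mixture density on `ℂ`:
`q_{θ,k,g}(z) = π⁻¹ ∫₀¹ exp(-|z - θ e^{-2πikφ}|²) dg(φ)`, for a mixing measure `g`
(a measure on `ℝ` thought of as carried by `[0,1]`). -/
def qdens (θ : ℂ) (k : ℤ) (g : Measure ℝ) (z : ℂ) : ℝ :=
  (∫ φ, Real.exp (-(norm
      (z - θ * Complex.exp (-(2 * Real.pi * (k : ℝ) * φ : ℝ) * Complex.I))) ^ 2) ∂g) / Real.pi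

/-- Total variation distance between densities on `ℂ`. -/
def dTVc (q₁ q₂ : ℂ → ℝ) : ℝ :=
  (1 / 2) * ∫ z : ℂ, |q₁ z - q₂ z|

/-- A probability measure on `[0,1]`, modelled as a probability measure on `ℝ`
giving no mass to the complement of `[0,1]`. -/
def IsProbOn01 (g : Measure ℝ) : Prop :=
  IsProbabilityMeasure g ∧ g (Set.Icc (0 : ℝ) 1)ᶜ = 0

/-- The Fourier coefficients `cₙ(g) = ∫₀¹ e^{-2πint} dg(t)` of a measure `g`. -/
def fourierCoeffM (g : Measure ℝ) (n : ℤ) : ℂ :=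
  ∫ t, Complex.exp (-(2 * Real.pi * (n : ℝ) * t : ℝ) * Complex.I) ∂g

open Function in
theorem integral_abs_integral_mul_kernel_le {α β : Type*} [MeasurableSpace α] [MeasurableSpace β]
    {μ : Measure α} {ν : Measure β} [SFinite μ] [SFinite ν] {K : α → β → ℝ}
    (hK : Measurable (uncurry K)) (hK0 : ∀ x y, 0 ≤ K x y)
    (hK1 : ∀ x, ∫ y, K x y ∂ν = 1) {D : α → ℝ} (hD : Integrable D μ) :
    ∫ y, |∫ x, D x * K x y ∂μ| ∂ν ≤ ∫ x, |D x| ∂μ := by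
  have hKi : ∀ x, Integrable (K x) ν := fun x => .of_integral_ne_zero (by simp [hK1])
  have hF : Integrable (uncurry fun x y => |D x| * K x y) (μ.prod ν) := by
    refine (integrable_prod_iff (f := uncurry fun x y => |D x| * K x y)
      (hD.abs.aestronglyMeasurable.comp_fst.mul hK.aestronglyMeasurable)).2 ⟨?_, ?_⟩
    · exact ae_of_all _ fun x => (hKi x).const_mul |D x|
    · simpa [abs_mul, abs_of_nonneg (hK0 _ _), integral_const_mul, hK1] using hD.abs
  calc ∫ y, |∫ x, D x * K x y ∂μ| ∂ν ≤ ∫ y, ∫ x, |D x| * K x y ∂μ ∂ν := by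
        refine integral_mono_of_nonneg (ae_of_all _ fun _ => abs_nonneg _)
          hF.integral_prod_right (ae_of_all _ fun y => ?_)
        calc _ ≤ ∫ x, |D x * K x y| ∂μ := abs_integral_le_integral_abs
          _ = _ := by simp_rw [abs_mul, abs_of_nonneg (hK0 _ y)]
    _ = ∫ x, |D x| ∂μ := by
        rw [← integral_integral_swap hF]
        simp_rw [integral_const_mul, hK1, mul_one]

theorem integral_abs_le_sqrt_integral_sq {α : Type*} [MeasurableSpace α] {μ : Measure α}
    [IsProbabilityMeasure μ] {f : α → ℝ} (hf : MemLp f 2 μ) :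
    ∫ x, |f x| ∂μ ≤ √(∫ x, f x ^ 2 ∂μ) := by
  have h := ProbabilityTheory.variance_eq_sub hf.abs
  have h0 := ProbabilityTheory.variance_nonneg (|f|) μ
  simp only [h, Pi.pow_apply, Pi.abs_apply, sq_abs, sub_nonneg] at h0
  exact (le_abs_self _).trans (Real.abs_le_sqrt h0)

theorem integral_withDensity_ofReal {α : Type*} [MeasurableSpace α] {μ : Measure α}
    {d : α → ℝ} (hd : AEMeasurable d μ) (f : α → ℝ) :
    ∫ x, f x ∂μ.withDensity (fun x => ENNReal.ofReal (d x)) = ∫ x, max (d x) 0 * f x ∂μ := by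
  rw [integral_withDensity_eq_integral_toReal_smul₀ hd.ennreal_ofReal
    (ae_of_all _ fun _ => ENNReal.ofReal_lt_top)]
  simp only [ENNReal.toReal_ofReal', smul_eq_mul]

theorem integral_exp_neg_norm_sub_sq (w : ℂ) : ∫ z : ℂ, Real.exp (-‖z - w‖ ^ 2) = Real.pi := by
  rw [integral_sub_right_eq_self (fun z : ℂ => Real.exp (-‖z‖ ^ 2)) w]
  simpa using GaussianFourier.integral_rexp_neg_mul_sq_norm (V := ℂ) one_pos

def circleGaussianKernel (θ : ℂ) (k : ℤ) (φ : ℝ) (z : ℂ) : ℝ :=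
  Real.exp (-(norm
      (z - θ * Complex.exp (-(2 * Real.pi * (k : ℝ) * φ : ℝ) * Complex.I))) ^ 2) / Real.pi

section circleGaussianKernel

variable (θ : ℂ) (k : ℤ)

theorem continuous_uncurry_circleGaussianKernel :
    Continuous (Function.uncurry (circleGaussianKernel θ k)) := by
  unfold circleGaussianKernel
  fun_prop

theorem circleGaussianKernel_nonneg (φ : ℝ) (z : ℂ) : 0 ≤ circleGaussianKernel θ k φ z := by
  unfold circleGaussianKernel
  positivity

theorem circleGaussianKernel_le (φ : ℝ) (z : ℂ) : circleGaussianKernel θ k φ z ≤ 1 / Real.pi := by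
  unfold circleGaussianKernel
  gcongr
  exact Real.exp_le_one_iff.2 (neg_nonpos.2 (sq_nonneg _))

theorem integral_circleGaussianKernel (φ : ℝ) : ∫ z, circleGaussianKernel θ k φ z = 1 := by
  unfold circleGaussianKernel
  rw [integral_div, integral_exp_neg_norm_sub_sq, div_self Real.pi_ne_zero]

theorem integrable_mul_circleGaussianKernel {μ : Measure ℝ} {d : ℝ → ℝ} (hd : Integrable d μ)
    (z : ℂ) : Integrable (fun φ => d φ * circleGaussianKernel θ k φ z) μ :=
  hd.mul_bdd ((continuous_uncurry_circleGaussianKernel θ k).comp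
      (continuous_id.prodMk continuous_const)).aestronglyMeasurable
    (ae_of_all _ fun φ => by
      rw [Real.norm_of_nonneg (circleGaussianKernel_nonneg θ k φ z)]
      exact circleGaussianKernel_le θ k φ z)

theorem qdens_withDensity_ofReal {μ : Measure ℝ} {d : ℝ → ℝ} (hd : AEMeasurable d μ) (z : ℂ) :
    qdens θ k (μ.withDensity fun t => ENNReal.ofReal (d t)) z
      = ∫ φ, max (d φ) 0 * circleGaussianKernel θ k φ z ∂μ := by
  rw [qdens, integral_withDensity_ofReal hd, ← integral_div]
  simp_rw [mul_div_assoc]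
  rfl

theorem qdens_withDensity_sub {μ : Measure ℝ} {d d₀ : ℝ → ℝ} (hd : Integrable d μ)
    (hd₀ : Integrable d₀ μ) (z : ℂ) :
    qdens θ k (μ.withDensity fun t => ENNReal.ofReal (d t)) z
        - qdens θ k (μ.withDensity fun t => ENNReal.ofReal (d₀ t)) z
      = ∫ φ, (max (d φ) 0 - max (d₀ φ) 0) * circleGaussianKernel θ k φ z ∂μ := by
  rw [qdens_withDensity_ofReal θ k hd.aemeasurable, qdens_withDensity_ofReal θ k hd₀.aemeasurable,
    ← integral_sub (integrable_mul_circleGaussianKernel θ k hd.pos_part z)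
      (integrable_mul_circleGaussianKernel θ k hd₀.pos_part z)]
  simp_rw [sub_mul]

end circleGaussianKernel

theorem tv_mixture_le_L2_general (k : ℤ) (θ : ℂ)
    (gd g0d : ℝ → ℝ)
    (hgd2 : MemLp gd 2 (volume.restrict (Set.Icc (0 : ℝ) 1)))
    (hg0d2 : MemLp g0d 2 (volume.restrict (Set.Icc (0 : ℝ) 1)))
    (g g0 : Measure ℝ)
    (hgdef : g = (volume.restrict (Set.Icc (0 : ℝ) 1)).withDensity
      (fun t => ENNReal.ofReal (gd t)))
    (hg0def : g0 = (volume.restrict (Set.Icc (0 : ℝ) 1)).withDensity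
      (fun t => ENNReal.ofReal (g0d t))) :
    dTVc (qdens θ k g) (qdens θ k g0)
      ≤ Real.exp (norm θ ^ 2)
          * Real.sqrt (∫ t in Set.Icc (0 : ℝ) 1, (gd t - g0d t) ^ 2) := by
  set μ := volume.restrict (Set.Icc (0 : ℝ) 1)
  have : IsProbabilityMeasure μ := ⟨by simp [μ]⟩
  have hgd := hgd2.integrable one_le_two
  have hg0d := hg0d2.integrable one_le_two
  have hpos_part : ∫ φ, |max (gd φ) 0 - max (g0d φ) 0| ∂μ ≤ ∫ φ, |gd φ - g0d φ| ∂μ :=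
    integral_mono_of_nonneg (ae_of_all _ fun _ => abs_nonneg _) (hgd.sub hg0d).abs
      (ae_of_all _ fun φ => abs_max_sub_max_le_abs _ _ _)
  subst hgdef hg0def
  calc dTVc (qdens θ k _) (qdens θ k _)
      = 1 / 2 * ∫ z, |∫ φ, (max (gd φ) 0 - max (g0d φ) 0) * circleGaussianKernel θ k φ z ∂μ| := by
        simp_rw [dTVc, qdens_withDensity_sub θ k hgd hg0d]
    _ ≤ 1 / 2 * ∫ φ, |max (gd φ) 0 - max (g0d φ) 0| ∂μ := by
        gcongr
        exact integral_abs_integral_mul_kernel_le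
          (continuous_uncurry_circleGaussianKernel θ k).measurable
          (circleGaussianKernel_nonneg θ k) (integral_circleGaussianKernel θ k)
          (hgd.pos_part.sub hg0d.pos_part)
    _ ≤ 1 / 2 * √(∫ φ, (gd φ - g0d φ) ^ 2 ∂μ) := by
        gcongr
        exact hpos_part.trans (integral_abs_le_sqrt_integral_sq (hgd2.sub hg0d2))
    _ ≤ Real.exp (‖θ‖ ^ 2) * √(∫ φ, (gd φ - g0d φ) ^ 2 ∂μ) := by
        gcongr
        linarith [Real.one_le_exp (sq_nonneg ‖θ‖)]

/-- **Inequality (4.4) in the proof of Theorem 4.3 of the paper.** For every `k ∈ ℤ`, `θ ∈ ℂ`,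
and probability measures `g, g⁰` on `[0,1]` with densities `gd, g⁰d ∈ L²([0,1])`,
`d_TV(q_{θ,k,g}, q_{θ,k,g⁰}) ≤ e^{|θ|²} ‖gd - g⁰d‖_{L²([0,1])}`. -/
theorem tv_mixture_le_L2 (k : ℤ) (θ : ℂ)
    (gd g0d : ℝ → ℝ) (hgd : Measurable gd) (hg0d : Measurable g0d)
    (hgd2 : MemLp gd 2 (volume.restrict (Set.Icc (0 : ℝ) 1)))
    (hg0d2 : MemLp g0d 2 (volume.restrict (Set.Icc (0 : ℝ) 1)))
    (g g0 : Measure ℝ)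
    (hgdef : g = (volume.restrict (Set.Icc (0 : ℝ) 1)).withDensity
      (fun t => ENNReal.ofReal (gd t)))
    (hg0def : g0 = (volume.restrict (Set.Icc (0 : ℝ) 1)).withDensity
      (fun t => ENNReal.ofReal (g0d t)))
    (hg : IsProbabilityMeasure g) (hg0 : IsProbabilityMeasure g0) :
    dTVc (qdens θ k g) (qdens θ k g0)
      ≤ Real.exp (norm θ ^ 2)
          * Real.sqrt (∫ t in Set.Icc (0 : ℝ) 1, (gd t - g0d t) ^ 2) :=
  tv_mixture_le_L2_general k θ gd g0d hgd2 hg0d2 g g0 hgdef hg0def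

end
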